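/- arXiv:1409.4188 — 7 statements merged into one kernel-verified Lean document; each statement's English description precedes it below -/
import Mathlib

section
/- Let A be the n×n integer matrix with entries A_{i,j} = (n-1) + (i - j) for 1 ≤ i,j ≤ n. Then the characteristic polynomial of A is det(A - λI) = (-1)^n λ^{n-2} (λ^2 - n(n-1)λ + n^2(n^2-1)/12) for n ≥ 2. -/
/-!
Writing `A i j = (n - 1 - j) + i` exhibits `A = U * V` with `U` of size `n × 2` and `V` of
size `2 × n`. Hence `χ_A = X ^ (n - 2) * χ_{V U}`, and the `2 × 2` matrix `V U` has trace
`n (n - 1)` and determinant `n² (n² - 1) / 12`, both computed from power sums of `0, …, n - 1`.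
-/

open Matrix Polynomial

namespace Matrix

variable {m R : Type*} [Fintype m] [DecidableEq m] [CommRing R]

theorem det_sub_smul_one_eq_neg_one_pow_mul_eval_charpoly (M : Matrix m m R) (t : R) :
    (M - t • (1 : Matrix m m R)).det = (-1) ^ Fintype.card m * M.charpoly.eval t := by
  rw [eval_charpoly, ← det_neg, neg_sub, smul_one_eq_diagonal]
  rfl

theorem charpoly_of_add [Nontrivial R] (f g : m → R) (hm : 2 ≤ Fintype.card m) :
    (of fun i j => f i + g j).charpoly =
      X ^ (Fintype.card m - 2) * (X ^ 2 - C (∑ i, f i + ∑ j, g j) * X +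
        C ((∑ j, g j) * ∑ i, f i - Fintype.card m * ∑ i, f i * g i)) := by
  let U : Matrix m (Fin 2) R := of fun i k => ![1, f i] k
  let V : Matrix (Fin 2) m R := of fun k j => ![g j, 1] k
  have hUV : (of fun i j => f i + g j) = U * V := by
    ext i j
    simp [U, V, mul_apply, Fin.sum_univ_two, add_comm]
  rw [hUV, charpoly_mul_comm_of_le U V (by simpa using hm), Fintype.card_fin, charpoly_fin_two,
    trace_fin_two, det_fin_two]
  simp [U, V, mul_apply, mul_comm, add_comm]

end Matrix

theorem Fin.sum_cast_val (n : ℕ) : ∑ j : Fin n, (j : ℚ) = n * (n - 1) / 2 := by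
  induction n with
  | zero => simp
  | succ n ih =>
    rw [Fin.sum_univ_castSucc]
    simp only [Fin.val_castSucc, ih, Fin.val_last]
    push_cast
    ring

theorem Fin.sum_cast_val_sq (n : ℕ) :
    ∑ j : Fin n, (j : ℚ) ^ 2 = n * (n - 1) * (2 * n - 1) / 6 := by
  induction n with
  | zero => simp
  | succ n ih =>
    rw [Fin.sum_univ_castSucc]
    simp only [Fin.val_castSucc, ih, Fin.val_last]
    push_cast
    ring

/-- The characteristic polynomial of the rank-two matrix `A i j = (n-1) + i - j`
is `(-1)^n λ^(n-2) (λ^2 - n(n-1)λ + n^2(n^2-1)/12)` for `n ≥ 2`. -/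
theorem stmt_1 (n : ℕ) (hn : 2 ≤ n)
    (A : Matrix (Fin n) (Fin n) ℚ)
    (hA : ∀ i j : Fin n, A i j = (n : ℚ) - 1 + (i : ℚ) - (j : ℚ)) :
    ∀ lam : ℚ,
      (A - lam • (1 : Matrix (Fin n) (Fin n) ℚ)).det
        = (-1) ^ n * lam ^ (n - 2) *
            (lam ^ 2 - n * (n - 1) * lam + n ^ 2 * (n ^ 2 - 1) / 12) := by
  intro lam
  have hA_add : A = of fun i j : Fin n => (i : ℚ) + ((n - 1 : ℚ) - j) := by
    ext i j
    rw [hA, of_apply]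
    ring
  rw [det_sub_smul_one_eq_neg_one_pow_mul_eval_charpoly, hA_add,
    charpoly_of_add _ _ (by simpa using hn)]
  simp only [Fintype.card_fin, eval_mul, eval_pow, eval_X, eval_sub, eval_add, eval_C,
    Finset.sum_sub_distrib, Finset.sum_const, Finset.card_univ, nsmul_eq_mul, mul_sub,
    ← Finset.sum_mul, ← pow_two, Fin.sum_cast_val, Fin.sum_cast_val_sq]
  ring
end

section
/- Suppose μ_1,...,μ_n are nonzero complex numbers and λ_1,...,λ_n are pairwise distinct complex numbers. Let s_m = Σ_{k=1}^n μ_k λ_k^m and let G_n(λ) = Σ_{m=0}^n g_m λ^m be the generating polynomial (the (n+1)×(n+1) determinant with first row (1, λ, ..., λ^n) and subsequent rows (s_{i-1},...,s_{i+n-1})). Then the generalized Newton formula Σ_{m=0}^n s_{v+m} g_m = 0 holds for every integer v ≥ 0. -/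
/-!
At `x = λₖ` the first row `(λₖ^j)_j` of `G_n(x)` and every moment row
`(s_{i+j})_j = ∑ₖ μₖ λₖ^i (λₖ^j)_j` lie in the span of the `n` vectors `(λₖ^j)_j`, so the
determinant factors through an `n`-dimensional space and `G_n(λₖ) = 0`. Hence
`∑_m s_{v+m} g_m = ∑ₖ μₖ λₖ^v G_n(λₖ) = 0`.
-/

open Matrix Finset

/-- The matrix whose determinant is the generating polynomial `G_n(x)`. -/
def momentMatrix {K : Type*} [Monoid K] (n : ℕ) (s : ℕ → K) (x : K) :
    Matrix (Fin (n + 1)) (Fin (n + 1)) K :=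
  Matrix.of fun i j => if (i : ℕ) = 0 then x ^ (j : ℕ) else s ((i : ℕ) - 1 + (j : ℕ))

theorem Matrix.det_mul_eq_zero_of_card_lt {K m l : Type*} [Field K] [Fintype m] [DecidableEq m]
    [Fintype l] (A : Matrix m l K) (B : Matrix l m K) (h : Fintype.card l < Fintype.card m) :
    (A * B).det = 0 := by
  by_contra hdet
  have hrank : (A * B).rank = Fintype.card m :=
    (A * B).rank_of_isUnit ((A * B).isUnit_iff_isUnit_det.mpr (isUnit_iff_ne_zero.mpr hdet))
  have := (rank_mul_le_right A B).trans B.rank_le_card_height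
  omega

theorem momentMatrix_eq_mul {K ι : Type*} [CommSemiring K] [Fintype ι] [DecidableEq ι] (n : ℕ)
    (μ lam : ι → K) (s : ℕ → K) (hs : ∀ m, s m = ∑ k, μ k * lam k ^ m) (k₀ : ι) :
    momentMatrix n s (lam k₀) =
      (Matrix.of fun (i : Fin (n + 1)) k =>
          if (i : ℕ) = 0 then (if k = k₀ then 1 else 0) else μ k * lam k ^ ((i : ℕ) - 1)) *
        Matrix.of fun k (j : Fin (n + 1)) => lam k ^ (j : ℕ) := by
  ext i j
  by_cases hi : (i : ℕ) = 0
  · obtain rfl : i = 0 := Fin.ext hi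
    simp [momentMatrix, mul_apply]
  · simp only [momentMatrix, mul_apply, of_apply, hi, if_false, hs, pow_add, mul_assoc]

theorem det_momentMatrix_eq_zero {K ι : Type*} [Field K] [Fintype ι] (n : ℕ)
    (hι : Fintype.card ι ≤ n) (μ lam : ι → K) (s : ℕ → K) (hs : ∀ m, s m = ∑ k, μ k * lam k ^ m)
    (k₀ : ι) : (momentMatrix n s (lam k₀)).det = 0 := by
  classical
  rw [momentMatrix_eq_mul n μ lam s hs k₀]
  exact det_mul_eq_zero_of_card_lt _ _ (by simpa using Nat.lt_succ_of_le hι)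

theorem sum_powerSum_mul_eq_zero {R ι : Type*} [CommSemiring R] [Fintype ι] {d : ℕ}
    (μ lam : ι → R) (s : ℕ → R) (hs : ∀ m, s m = ∑ k, μ k * lam k ^ m) (g : Fin d → R)
    (hroot : ∀ k, ∑ m : Fin d, g m * lam k ^ (m : ℕ) = 0) (v : ℕ) :
    ∑ m : Fin d, s (v + (m : ℕ)) * g m = 0 :=
  calc ∑ m : Fin d, s (v + (m : ℕ)) * g m
      = ∑ k, μ k * lam k ^ v * ∑ m : Fin d, g m * lam k ^ (m : ℕ) := by
        simp only [hs, sum_mul, mul_sum, pow_add]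
        rw [sum_comm]
        exact sum_congr rfl fun k _ => sum_congr rfl fun m _ => by ring
    _ = 0 := sum_eq_zero fun k _ => by rw [hroot k, mul_zero]

theorem stmt_4_general (n : ℕ) (μ lam : Fin n → ℂ)
    (s : ℕ → ℂ) (hs : ∀ m : ℕ, s m = ∑ k, μ k * lam k ^ m)
    (g : Fin (n + 1) → ℂ)
    (hg : ∀ x : ℂ,
      (Matrix.of fun i j : Fin (n + 1) =>
        if (i : ℕ) = 0 then x ^ (j : ℕ) else s ((i : ℕ) - 1 + (j : ℕ))).det
      = ∑ m : Fin (n + 1), g m * x ^ (m : ℕ)) :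
    ∀ v : ℕ, ∑ m : Fin (n + 1), s (v + (m : ℕ)) * g m = 0 :=
  sum_powerSum_mul_eq_zero μ lam s hs g fun k => by
    rw [← hg]
    exact det_momentMatrix_eq_zero n (by simp) μ lam s hs k

/-- Generalized Newton formula: the moments `s_m` and the coefficients `g_m` of
the generating polynomial satisfy `∑_{m=0}^n s_{v+m} g_m = 0` for every `v ≥ 0`. -/
theorem stmt_4 (n : ℕ) (μ lam : Fin n → ℂ)
    (hμ : ∀ k, μ k ≠ 0) (hlam : Function.Injective lam)
    (s : ℕ → ℂ) (hs : ∀ m : ℕ, s m = ∑ k, μ k * lam k ^ m)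
    (g : Fin (n + 1) → ℂ)
    (hg : ∀ x : ℂ,
      (Matrix.of fun i j : Fin (n + 1) =>
        if (i : ℕ) = 0 then x ^ (j : ℕ) else s ((i : ℕ) - 1 + (j : ℕ))).det
      = ∑ m : Fin (n + 1), g m * x ^ (m : ℕ)) :
    ∀ v : ℕ, ∑ m : Fin (n + 1), s (v + (m : ℕ)) * g m = 0 :=
  stmt_4_general n μ lam s hs g hg
end

section
/- Let n ≥ 3, δ := 1 + 3|p|/((n-1)(n-2)) for a complex parameter p, and Λ := (2δ)^{3/√(n-2)}. Then every root λ of the polynomial λ^n - 6λ(λ^{n-1}-(n-1)λ+(n-2))/((n-1)(n-2)(λ-1)^2) + 2 + 6p/((n-1)(n-2)) (equivalently of λ^n - (6/((n-1)(n-2))) Σ_{m=1}^{n-1}(n-1-m)λ^m + 2 + 6p/((n-1)(n-2))) satisfies |λ| ≤ Λ. -/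
/-!
Write `r = ‖λ‖`, `D = (n - 1)(n - 2)` and `F(r) = ∑_{m=1}^{n-1} (n - 1 - m) r^m`. The triangle
inequality applied to `λ^n = (6/D) ∑ (n-1-m) λ^m - 2 - 6p/D` gives `r^n ≤ (6/D) F(r) + 2δ`, and the
closed form `(r - 1)² F(r) = r^n - (n - 1) r² + (n - 2) r` gives `(r - 1)² F(r) ≤ r^n` for `r ≥ 1`.
If `r - 1 ≥ 2√3/(n - 2)`, then `(r - 1)² ≥ 12/D`, so `r^n ≤ 4δ ≤ (2δ)²`, and `r ≤ Λ` because
`Λ^n = (2δ)^{3n/√(n-2)}` with `3n/√(n-2) ≥ 2`. Otherwise `r ≤ 1 + 2√3/(n - 2) ≤ 2^{3/√(n-2)} ≤ Λ`,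
the middle inequality coming from `exp t ≥ 1 + t + t²/2`.
-/

open Finset Complex

def rampSum {R : Type*} [CommRing R] (n : ℕ) (x : R) : R :=
  ∑ m ∈ Ico 1 n, ((n : R) - 1 - m) * x ^ m

section CommRing

variable {R : Type*} [CommRing R]

lemma rampSum_succ (n : ℕ) (x : R) :
    rampSum (n + 1) x = rampSum n x + ∑ m ∈ Ico 1 n, x ^ m := by
  rcases Nat.eq_zero_or_pos n with rfl | hn
  · simp [rampSum]
  · rw [rampSum, rampSum, sum_Ico_succ_top hn, ← sum_add_distrib]
    push_cast
    simp only [sub_self, zero_mul, add_zero, add_sub_cancel_right]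
    exact sum_congr rfl fun m _ => by ring

lemma sq_sub_one_mul_rampSum {n : ℕ} (hn : 1 ≤ n) (x : R) :
    (x - 1) ^ 2 * rampSum n x = x ^ n - ((n : R) - 1) * x ^ 2 + ((n : R) - 2) * x := by
  induction n, hn using Nat.le_induction with
  | base => simp [rampSum]; ring
  | succ n hn ih =>
    rw [rampSum_succ]
    push_cast
    linear_combination ih + (x - 1) * geom_sum_Ico_mul x hn

end CommRing

section OrderedRing

variable {R : Type*} [CommRing R] [LinearOrder R] [IsStrictOrderedRing R]

lemma sq_sub_one_mul_rampSum_le (n : ℕ) {x : R} (hx : 1 ≤ x) :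
    (x - 1) ^ 2 * rampSum n x ≤ x ^ n := by
  rcases Nat.eq_zero_or_pos n with rfl | hn
  · simp [rampSum]
  · have hn' : (1 : R) ≤ n := by exact_mod_cast hn
    have hx0 : (0 : R) ≤ x := zero_le_one.trans hx
    rw [sq_sub_one_mul_rampSum hn]
    nlinarith [mul_nonneg (mul_nonneg (sub_nonneg.2 hn') hx0) (sub_nonneg.2 hx)]

lemma rampSum_nonneg (n : ℕ) {x : R} (hx : 0 ≤ x) : 0 ≤ rampSum n x := by
  refine sum_nonneg fun m hm => mul_nonneg ?_ (pow_nonneg hx m)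
  have hm : (m : R) + 1 ≤ n := by exact_mod_cast (mem_Ico.1 hm).2
  linarith

end OrderedRing

lemma norm_rampSum_le (n : ℕ) (z : ℂ) : ‖rampSum n z‖ ≤ rampSum n ‖z‖ := by
  refine (norm_sum_le _ _).trans (le_of_eq (sum_congr rfl fun m hm => ?_))
  have hm : (m : ℝ) + 1 ≤ n := by exact_mod_cast (mem_Ico.1 hm).2
  rw [norm_mul, norm_pow, show (n : ℂ) - 1 - m = ((n - 1 - m : ℝ) : ℂ) by push_cast; ring,
    norm_real, Real.norm_of_nonneg (by linarith)]

lemma two_sqrt_three_div_le_two_rpow_sub_one {x : ℝ} (hx : 1 ≤ x) :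
    2 * √3 / x ≤ 2 ^ (3 / √x) - 1 := by
  set s := √x
  have hs : 1 ≤ s := Real.one_le_sqrt.2 hx
  have hxs : x = s ^ 2 := (Real.sq_sqrt (by linarith)).symm
  have hL : 0.6931471803 < Real.log 2 := Real.log_two_gt_d9
  have h3 : √3 < 1.7321 := by
    rw [Real.sqrt_lt' (by norm_num)]; norm_num
  have hexp : 1 + 3 / s * Real.log 2 + (3 / s * Real.log 2) ^ 2 / 2 ≤ 2 ^ (3 / s) := by
    rw [Real.rpow_def_of_pos two_pos, mul_comm]
    exact Real.quadratic_le_exp_of_nonneg (by positivity)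
  suffices 2 * √3 / x ≤ 3 / s * Real.log 2 + (3 / s * Real.log 2) ^ 2 / 2 by linarith
  rw [hxs, div_le_iff₀ (by positivity)]
  have : (3 / s * Real.log 2 + (3 / s * Real.log 2) ^ 2 / 2) * s ^ 2
      = 3 * Real.log 2 * s + 9 / 2 * Real.log 2 ^ 2 := by field_simp; ring
  rw [this]
  nlinarith

lemma le_rpow_of_pow_le_sq {r a c : ℝ} {n : ℕ} (hr : 0 ≤ r) (ha : 1 ≤ a) (hc : 2 ≤ c * n)
    (h : r ^ n ≤ a ^ 2) : r ≤ a ^ c := by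
  have hn : n ≠ 0 := by rintro rfl; norm_num at hc
  refine (pow_le_pow_iff_left₀ hr (by positivity) hn).1 ?_
  calc r ^ n ≤ a ^ (2 : ℝ) := by rwa [Real.rpow_two]
    _ ≤ a ^ (c * n) := Real.rpow_le_rpow_of_exponent_le ha hc
    _ = (a ^ c) ^ n := by rw [Real.rpow_mul (by linarith), Real.rpow_natCast]

lemma natCast_sub_one_mul_sub_two_nonneg (n : ℕ) : 0 ≤ ((n : ℝ) - 1) * ((n : ℝ) - 2) := by
  rcases n with _ | _ | n
  · norm_num
  · norm_num
  · push_cast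
    nlinarith

lemma norm_pow_le_of_root {n : ℕ} {p lam : ℂ}
    (hroot : lam ^ n - 6 / (((n : ℂ) - 1) * ((n : ℂ) - 2)) * rampSum n lam + 2 +
      6 * p / (((n : ℂ) - 1) * ((n : ℂ) - 2)) = 0) :
    ‖lam‖ ^ n ≤ 6 / (((n : ℝ) - 1) * ((n : ℝ) - 2)) * rampSum n ‖lam‖ +
      2 * (1 + 3 * ‖p‖ / (((n : ℝ) - 1) * ((n : ℝ) - 2))) := by
  set D : ℝ := ((n : ℝ) - 1) * ((n : ℝ) - 2)
  have hDc : ((n : ℂ) - 1) * ((n : ℂ) - 2) = (D : ℂ) := by push_cast [D]; ring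
  rw [hDc] at hroot
  have hlam : lam ^ n = 6 / D * rampSum n lam - (2 + 6 * p / D) := by
    linear_combination hroot
  have hD : ‖(D : ℂ)‖ = D := by
    rw [norm_real, Real.norm_of_nonneg (natCast_sub_one_mul_sub_two_nonneg n)]
  calc ‖lam‖ ^ n ≤ ‖6 / (D : ℂ) * rampSum n lam‖ + (‖(2 : ℂ)‖ + ‖6 * p / D‖) := by
        rw [← norm_pow, hlam]
        exact (norm_sub_le _ _).trans (add_le_add le_rfl (norm_add_le _ _))
    _ = 6 / D * ‖rampSum n lam‖ + 2 * (1 + 3 * ‖p‖ / D) := by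
        simp only [norm_mul, norm_div, hD, Complex.norm_ofNat]
        ring
    _ ≤ _ := by
        gcongr
        · exact div_nonneg (by norm_num) (natCast_sub_one_mul_sub_two_nonneg n)
        · exact norm_rampSum_le n lam

lemma le_rpow_of_pow_le_rampSum {n : ℕ} (hn : 3 ≤ n) {r δ : ℝ} (hr : 0 ≤ r) (hδ : 1 ≤ δ)
    (h : r ^ n ≤ 6 / (((n : ℝ) - 1) * ((n : ℝ) - 2)) * rampSum n r + 2 * δ) :
    r ≤ (2 * δ) ^ (3 / √((n : ℝ) - 2)) := by
  have hn3 : (3 : ℝ) ≤ n := by exact_mod_cast hn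
  set D := ((n : ℝ) - 1) * ((n : ℝ) - 2)
  set ε := 2 * √3 / ((n : ℝ) - 2)
  by_cases hrε : r ≤ 1 + ε
  · calc r ≤ 1 + ε := hrε
      _ ≤ 2 ^ (3 / √((n : ℝ) - 2)) := by
        linarith [two_sqrt_three_div_le_two_rpow_sub_one (x := (n : ℝ) - 2) (by linarith)]
      _ ≤ (2 * δ) ^ (3 / √((n : ℝ) - 2)) :=
        Real.rpow_le_rpow (by norm_num) (by linarith) (by positivity)
  · push Not at hrε
    have hε : 0 ≤ ε := div_nonneg (by positivity) (by linarith)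
    have hr1 : 1 ≤ r := by linarith
    have hweight : 6 / D ≤ (r - 1) ^ 2 / 2 := by
      have hε2 : ε ^ 2 = 12 / ((n : ℝ) - 2) ^ 2 := by
        rw [div_pow, mul_pow, Real.sq_sqrt (by norm_num)]; ring
      have h12 : 12 / D ≤ ε ^ 2 := by
        rw [hε2]
        exact div_le_div_of_nonneg_left (by norm_num) (by nlinarith) (by nlinarith)
      linarith [pow_le_pow_left₀ hε (by linarith : ε ≤ r - 1) 2, show 6 / D = 12 / D / 2 by ring]
    have hpow : r ^ n ≤ (2 * δ) ^ 2 := by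
      nlinarith [sq_sub_one_mul_rampSum_le n hr1,
        mul_le_mul_of_nonneg_right hweight (rampSum_nonneg n hr)]
    refine le_rpow_of_pow_le_sq hr (by linarith) ?_ hpow
    have hsqrt : √((n : ℝ) - 2) ≤ n := by
      rw [Real.sqrt_le_left (by linarith)]; nlinarith
    rw [div_mul_eq_mul_div, le_div_iff₀ (Real.sqrt_pos.2 (by linarith))]
    linarith

/-- Bound on the roots of the monic part of the generating polynomial of the
numerical differentiation problem: every root `λ` satisfies
`|λ| ≤ Λ = (2δ)^{3/√(n-2)}` where `δ = 1 + 3|p|/((n-1)(n-2))`. -/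
theorem stmt_9 (n : ℕ) (hn : 3 ≤ n) (p : ℂ)
    (δ Λ : ℝ)
    (hδ : δ = 1 + 3 * ‖p‖ / ((n - 1) * (n - 2)))
    (hΛ : Λ = (2 * δ) ^ ((3 : ℝ) / Real.sqrt (n - 2)))
    (lam : ℂ)
    (hroot : lam ^ n -
        6 / (((n : ℂ) - 1) * ((n : ℂ) - 2)) *
          ∑ m ∈ Finset.Ico 1 n, ((n : ℂ) - 1 - m) * lam ^ m +
        2 + 6 * p / (((n : ℂ) - 1) * ((n : ℂ) - 2)) = 0) :
    ‖lam‖ ≤ Λ := by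
  have hδ1 : 1 ≤ δ := by
    rw [hδ, le_add_iff_nonneg_right]
    exact div_nonneg (by positivity) (natCast_sub_one_mul_sub_two_nonneg n)
  rw [hΛ]
  refine le_rpow_of_pow_le_rampSum hn (norm_nonneg lam) hδ1 ?_
  rw [hδ]
  exact norm_pow_le_of_root hroot
end

section
/- Let a > 0, p > 0, and n ≥ 1. Define the polynomial Ǧ(λ) = λ^n - (a^{2n-1}/(n a^{n-1} + p)) Σ_{m=0}^{n-1} λ^m / a^m. Then Ǧ has exactly n pairwise distinct complex roots (i.e., Ǧ is separable). -/
/-!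
Multiplying `Ǧ` by `λ - a` gives the trinomial `P = λ^(n+1) - B λ^n + D` with
`B = a + a^n/(n a^(n-1) + p)` and `D = a^(2n)/(n a^(n-1) + p) > 0`. A multiple root of `P` is a
root of `P' = λ^(n-1) ((n+1) λ - n B)`; it is not `0` since `P(0) = D ≠ 0`, so it is the critical
point `r = n B/(n+1)`. Since `a` is a root of `P`, `D = a^n (B - a)`, and by AM-GM the function
`x^n (B - x)` on `[0, B]` has its strict maximum at `r`. As `p > 0` forces `a ≠ r`, we get
`P(r) = D - r^n (B - r) < 0`. Hence `P`, and with it its factor `Ǧ`, has simple roots.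
-/

open Finset Polynomial

theorem Real.pow_mul_lt_mean_pow_succ {n : ℕ} (hn : n ≠ 0) {y z : ℝ} (hy : 0 ≤ y) (hz : 0 ≤ z)
    (hyz : y ≠ z) : y ^ n * z < ((n * y + z) / (n + 1)) ^ (n + 1) := by
  have hamgm := (Real.geom_mean_lt_arith_mean2_weighted_iff_of_pos
    (w₁ := n / (n + 1)) (w₂ := 1 / (n + 1)) (by positivity) (by positivity) hy hz
    (by field_simp)).2 hyz
  calc y ^ n * z = (y ^ (n / (n + 1) : ℝ) * z ^ (1 / (n + 1) : ℝ)) ^ (n + 1) := by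
        rw [mul_pow, ← Real.rpow_mul_natCast hy, ← Real.rpow_mul_natCast hz]
        push_cast
        field_simp
        norm_num
    _ < (n / (n + 1) * y + 1 / (n + 1) * z) ^ (n + 1) :=
        pow_lt_pow_left₀ hamgm (by positivity) (by omega)
    _ = ((n * y + z) / (n + 1)) ^ (n + 1) := by
        field_simp

theorem Real.pow_mul_sub_lt_of_ne {n : ℕ} (hn : n ≠ 0) {x r B : ℝ} (hx : 0 ≤ x) (hxB : x ≤ B)
    (hr : (n + 1) * r = n * B) (hxr : x ≠ r) : x ^ n * (B - x) < r ^ n * (B - r) := by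
  have hn0 : (n : ℝ) ≠ 0 := by positivity
  have hr' : r = n * (B / (n + 1)) := by field_simp; linarith
  -- AM-GM for `n` copies of `x / n` and one copy of `B - x`
  have hamgm := Real.pow_mul_lt_mean_pow_succ hn (y := x / n) (z := B - x) (by positivity)
    (by linarith) fun h => hxr <| by rw [hr']; field_simp at h ⊢; linarith
  calc x ^ n * (B - x) = n ^ n * ((x / n) ^ n * (B - x)) := by
        rw [div_pow]; field_simp
    _ < n ^ n * ((n * (x / n) + (B - x)) / (n + 1)) ^ (n + 1) := by gcongr
    _ = r ^ n * (B - r) := by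
        rw [mul_div_cancel₀ x hn0, add_sub_cancel, hr', pow_succ, mul_pow]
        field_simp
        ring

namespace Polynomial

theorem nodup_roots_of_forall_not_isRoot_derivative {R : Type*} [CommRing R] [IsDomain R]
    {p : R[X]} (hp : p ≠ 0) (h : ∀ r, p.IsRoot r → ¬(derivative p).IsRoot r) :
    p.roots.Nodup := by
  classical
  refine Multiset.nodup_iff_count_le_one.2 fun r => ?_
  rw [count_roots]
  by_contra! hr
  obtain ⟨hroot, hroot'⟩ := (one_lt_rootMultiplicity_iff_isRoot hp).1 hr
  exact h r hroot hroot'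

theorem exists_injective_eval_eq_prod_sub {K : Type*} [Field K] [IsAlgClosed K] {p : K[X]}
    (hp : p.Monic) {n : ℕ} (hdeg : p.natDegree = n) (hnd : p.roots.Nodup) :
    ∃ l : Fin n → K, Function.Injective l ∧ ∀ z, p.eval z = ∏ k, (z - l k) := by
  let s : Finset K := ⟨p.roots, hnd⟩
  let e : s ≃ Fin n := s.equivFinOfCardEq (IsAlgClosed.card_roots_eq_natDegree.trans hdeg)
  refine ⟨fun k => e.symm k, Subtype.val_injective.comp e.symm.injective, fun z => ?_⟩
  rw [(IsAlgClosed.splits p).eval_eq_prod_roots_of_monic hp,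
    e.symm.prod_comp (fun x : s => z - x), Finset.prod_coe_sort s (z - ·)]
  rfl

section Trinomial

variable {R : Type*} [CommRing R]

theorem monic_X_pow_succ_sub_C_mul_X_pow_add_C (n : ℕ) (B D : R) :
    (X ^ (n + 1) - C B * X ^ n + C D).Monic := by
  monicity!

theorem natDegree_X_pow_succ_sub_C_mul_X_pow_add_C [Nontrivial R] (n : ℕ) (B D : R) :
    (X ^ (n + 1) - C B * X ^ n + C D).natDegree = n + 1 := by
  compute_degree!

theorem critical_of_isRoot_of_isRoot_derivative [IsDomain R] {n : ℕ} (hn : n ≠ 0) {B D r : R}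
    (hD : D ≠ 0) (hr : (X ^ (n + 1) - C B * X ^ n + C D).IsRoot r)
    (hr' : (derivative (X ^ (n + 1) - C B * X ^ n + C D)).IsRoot r) :
    (n + 1) * r = n * B ∧ r ^ n * (B - r) = D := by
  simp only [IsRoot, eval_add, eval_sub, eval_mul, eval_pow, eval_X, eval_C, derivative_add,
    derivative_sub, derivative_mul, derivative_X_pow, derivative_C, zero_mul, zero_add,
    add_zero] at hr hr'
  have hr0 : r ≠ 0 := by
    rintro rfl
    exact hD (by simpa [hn] using hr)
  obtain ⟨k, rfl⟩ := Nat.exists_eq_succ_of_ne_zero hn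
  refine ⟨?_, by linear_combination -hr⟩
  have hfac : r ^ k * ((k + 1 + 1) * r - (k + 1) * B) = 0 := by
    push_cast at hr'
    linear_combination hr'
  push_cast
  linear_combination (mul_eq_zero.1 hfac).resolve_left (pow_ne_zero _ hr0)

theorem nodup_roots_X_pow_succ_sub_C_mul_X_pow_add_C {n : ℕ} (hn : n ≠ 0) {a B D : ℝ}
    (ha : 0 < a) (hD : 0 < D) (haD : a ^ n * (B - a) = D) (hcrit : (n + 1) * a ≠ n * B) :
    (X ^ (n + 1) - C (B : ℂ) * X ^ n + C (D : ℂ)).roots.Nodup := by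
  refine nodup_roots_of_forall_not_isRoot_derivative
    (monic_X_pow_succ_sub_C_mul_X_pow_add_C n _ _).ne_zero fun r hr hr' => ?_
  obtain ⟨hcr, hval⟩ :=
    critical_of_isRoot_of_isRoot_derivative hn (by exact_mod_cast hD.ne') hr hr'
  set ρ : ℝ := n * B / (n + 1)
  have hρ : (n + 1) * ρ = n * B := by simp only [ρ]; field_simp
  have hrρ : r = ρ := by
    apply mul_left_cancel₀ (Nat.cast_add_one_ne_zero n : (n : ℂ) + 1 ≠ 0)
    rw [hcr]; exact_mod_cast hρ.symm
  rw [hrρ] at hval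
  have hlt := Real.pow_mul_sub_lt_of_ne hn ha.le
    (by nlinarith [pow_pos ha n]) hρ (fun h => hcrit (h ▸ hρ))
  have : ρ ^ n * (B - ρ) = D := by exact_mod_cast hval
  linarith

end Trinomial

section GeneratingPoly

variable {K : Type*} [Field K]

/-- `Ǧ` is `generatingPoly n a c` with `c = a^(2n-1)/(n a^(n-1) + p)`. -/
noncomputable def generatingPoly (n : ℕ) (a c : K) : K[X] :=
  X ^ n - C c * ∑ m ∈ range n, C (a ^ m)⁻¹ * X ^ m

theorem eval_generatingPoly (n : ℕ) (a c z : K) :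
    (generatingPoly n a c).eval z = z ^ n - c * ∑ m ∈ range n, z ^ m / a ^ m := by
  simp only [generatingPoly, eval_sub, eval_mul, eval_C, eval_pow, eval_X, eval_finsetSum,
    div_eq_inv_mul]

theorem X_sub_C_mul_generatingPoly (n : ℕ) {a : K} (ha : a ≠ 0) (c : K) :
    (X - C a) * generatingPoly n a c =
      X ^ (n + 1) - C (a + c * a / a ^ n) * X ^ n + C (c * a) := by
  have hgeom : (X - C a) * ∑ m ∈ range n, C (a ^ m)⁻¹ * X ^ m =
      C (a * a⁻¹ ^ n) * X ^ n - C a := by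
    have hX : X - C a = C a * (C a⁻¹ * X - 1) := by
      rw [mul_sub, ← mul_assoc, ← C_mul, mul_inv_cancel₀ ha, C_1, one_mul, mul_one]
    have hsum : ∑ m ∈ range n, C (a ^ m)⁻¹ * X ^ m = ∑ m ∈ range n, (C a⁻¹ * X) ^ m := by
      simp only [mul_pow, ← C_pow, inv_pow]
    rw [hX, hsum, mul_assoc, mul_comm (_ - 1), geom_sum_mul, C_mul, C_pow]
    ring
  rw [generatingPoly, mul_sub, mul_left_comm, hgeom,
    show c * a / a ^ n = c * (a * a⁻¹ ^ n) by rw [inv_pow]; ring]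
  simp only [C_add, C_mul]
  ring

theorem monic_generatingPoly (n : ℕ) {a : K} (ha : a ≠ 0) (c : K) :
    (generatingPoly n a c).Monic :=
  (monic_X_sub_C a).of_mul_monic_left <| by
    rw [X_sub_C_mul_generatingPoly n ha]; exact monic_X_pow_succ_sub_C_mul_X_pow_add_C _ _ _

theorem natDegree_generatingPoly (n : ℕ) {a : K} (ha : a ≠ 0) (c : K) :
    (generatingPoly n a c).natDegree = n := by
  have := (monic_X_sub_C a).natDegree_mul (monic_generatingPoly n ha c)
  rw [X_sub_C_mul_generatingPoly n ha, natDegree_X_pow_succ_sub_C_mul_X_pow_add_C,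
    natDegree_X_sub_C] at this
  omega

end GeneratingPoly

theorem nodup_roots_generatingPoly {n : ℕ} (hn : n ≠ 0) {a c : ℝ} (ha : 0 < a) (hc : 0 < c)
    (hnc : n * c < a ^ n) : (generatingPoly n (a : ℂ) c).roots.Nodup := by
  have hcrit : ((n : ℝ) + 1) * a ≠ n * (a + c * a / a ^ n) := by
    have : n * (c * a / a ^ n) < a := by
      rw [← mul_div_assoc, div_lt_iff₀ (pow_pos ha n), ← mul_assoc, mul_comm a]
      exact mul_lt_mul_of_pos_right hnc ha
    intro h
    linarith
  have hfact : (X - C (a : ℂ)) * generatingPoly n (a : ℂ) c =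
      X ^ (n + 1) - C ((a + c * a / a ^ n : ℝ) : ℂ) * X ^ n + C ((c * a : ℝ) : ℂ) := by
    rw [X_sub_C_mul_generatingPoly n (by exact_mod_cast ha.ne')]; push_cast; rfl
  exact Multiset.nodup_of_le (roots.le_of_dvd
    (monic_X_pow_succ_sub_C_mul_X_pow_add_C _ _ _).ne_zero (Dvd.intro_left _ hfact))
    (nodup_roots_X_pow_succ_sub_C_mul_X_pow_add_C hn ha (by positivity) (by field_simp; ring)
      hcrit)

end Polynomial

/-- The generating polynomial of the regularized extrapolation problem,
`Ǧ(λ) = λ^n - (a^{2n-1}/(n a^{n-1}+p)) Σ_{m=0}^{n-1} λ^m/a^m`, has exactly `n`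
pairwise distinct complex roots. -/
theorem stmt_10 (n : ℕ) (hn : 1 ≤ n) (a p : ℝ) (ha : 0 < a) (hp : 0 < p)
    (G : ℂ → ℂ)
    (hG : ∀ z : ℂ, G z = z ^ n -
      ((a : ℂ) ^ (2 * n - 1) / (n * (a : ℂ) ^ (n - 1) + p)) *
        ∑ m ∈ Finset.range n, z ^ m / (a : ℂ) ^ m) :
    ∃ l : Fin n → ℂ, Function.Injective l ∧ ∀ z : ℂ, G z = ∏ k, (z - l k) := by
  set c : ℝ := a ^ (2 * n - 1) / (n * a ^ (n - 1) + p) with hc_def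
  have hnc : n * c < a ^ n := by
    rw [mul_div_assoc', div_lt_iff₀ (by positivity), show 2 * n - 1 = n + (n - 1) by omega,
      pow_add]
    nlinarith [pow_pos ha n]
  have hG' : ∀ z, G z = (generatingPoly n (a : ℂ) c).eval z := by
    intro z; rw [hG, eval_generatingPoly, hc_def]; push_cast; rfl
  have ha' : (a : ℂ) ≠ 0 := by exact_mod_cast ha.ne'
  obtain ⟨l, hl, hprod⟩ := exists_injective_eval_eq_prod_sub (monic_generatingPoly n ha' c)
    (natDegree_generatingPoly n ha' c)
    (nodup_roots_generatingPoly (by omega) ha (by positivity) hnc)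
  exact ⟨l, hl, fun z => (hG' z).trans (hprod z)⟩
end

section
/- Let a > 0, p > 0, n ≥ 1. Suppose (S_v)_{v ≥ 0} is a sequence of real numbers satisfying S_v = a^v for 0 ≤ v ≤ 2n-1 with v ≠ n-1, S_{n-1} = a^{n-1} + p, and the recurrence S_{v+1} = (a^{2n-1}/(n a^{n-1} + p)) Σ_{m=0}^{n-1} S_{v-n+m+1} / a^m for all v ≥ 2n - 1. Then 0 ≤ S_v ≤ a^v for all v ≥ 2n. -/
open Finset

/-!
Write `c = a ^ (2n-1) / (n a ^ (n-1) + p)`. The recurrence expresses `S (k + n)` as `c` times a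
weighted sum of the `n` preceding values `S (k + m) / a ^ m`. If each of these lies in
`[0, a ^ (k + m)]`, every summand lies in `[0, a ^ k]`, so `S (k + n)` lies in
`[0, c n a ^ k]`, and `c n a ^ k = n a ^ (n-1) a ^ (k+n) / (n a ^ (n-1) + p) ≤ a ^ (k + n)`
because `p ≥ 0`. Since the initial values `S v = a ^ v` for `n ≤ v < 2n` lie in their
envelopes, strong induction gives `S v ∈ [0, a ^ v]` for all `v ≥ n`.
-/

section

variable {n : ℕ} {a p : ℝ}

lemma sum_window_div_pow_le (ha : 0 < a) {S : ℕ → ℝ} {k : ℕ}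
    (hS : ∀ m < n, S (k + m) ≤ a ^ (k + m)) :
    ∑ m ∈ range n, S (k + m) / a ^ m ≤ n * a ^ k := by
  calc ∑ m ∈ range n, S (k + m) / a ^ m
      ≤ ∑ _m ∈ range n, a ^ k := by
        refine sum_le_sum fun m hm => ?_
        rw [div_le_iff₀ (by positivity), ← pow_add]
        exact hS m (mem_range.mp hm)
    _ = n * a ^ k := by rw [sum_const, card_range, nsmul_eq_mul]

lemma recurrence_coeff_mul_le (hn : 1 ≤ n) (ha : 0 < a) (hp : 0 ≤ p) (k : ℕ) :
    a ^ (2 * n - 1) / (n * a ^ (n - 1) + p) * (n * a ^ k) ≤ a ^ (k + n) := by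
  have hpow : a ^ (2 * n - 1) * a ^ k = a ^ (n - 1) * a ^ (k + n) := by
    rw [← pow_add, ← pow_add]; congr 1; omega
  rw [div_mul_eq_mul_div, div_le_iff₀ (by positivity)]
  calc a ^ (2 * n - 1) * (n * a ^ k) = n * a ^ (n - 1) * a ^ (k + n) := by
        rw [mul_left_comm, hpow, mul_assoc]
    _ ≤ a ^ (k + n) * (n * a ^ (n - 1) + p) := by
        rw [mul_comm (a ^ (k + n))]; gcongr; linarith

lemma recurrence_step_mem_Icc (hn : 1 ≤ n) (ha : 0 < a) (hp : 0 ≤ p) {S : ℕ → ℝ} {k : ℕ}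
    (hS : ∀ m < n, S (k + m) ∈ Set.Icc 0 (a ^ (k + m))) :
    a ^ (2 * n - 1) / (n * a ^ (n - 1) + p) * ∑ m ∈ range n, S (k + m) / a ^ m ∈
      Set.Icc 0 (a ^ (k + n)) := by
  have hc : 0 ≤ a ^ (2 * n - 1) / (n * a ^ (n - 1) + p) := by positivity
  constructor
  · refine mul_nonneg hc (sum_nonneg fun m hm => ?_)
    exact div_nonneg (hS m (mem_range.mp hm)).1 (by positivity)
  · calc _ ≤ a ^ (2 * n - 1) / (n * a ^ (n - 1) + p) * (n * a ^ k) :=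
          mul_le_mul_of_nonneg_left (sum_window_div_pow_le ha fun m hm => (hS m hm).2) hc
      _ ≤ a ^ (k + n) := recurrence_coeff_mul_le hn ha hp k

lemma mem_Icc_of_recurrence (hn : 1 ≤ n) (ha : 0 < a) (hp : 0 ≤ p) {S : ℕ → ℝ}
    (hbase : ∀ v, n ≤ v → v < 2 * n → S v ∈ Set.Icc 0 (a ^ v))
    (hrec : ∀ k, n ≤ k →
      S (k + n) = a ^ (2 * n - 1) / (n * a ^ (n - 1) + p) * ∑ m ∈ range n, S (k + m) / a ^ m) :
    ∀ v, n ≤ v → S v ∈ Set.Icc 0 (a ^ v) := by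
  intro v
  induction v using Nat.strong_induction_on with
  | _ v ih =>
    intro hv
    rcases lt_or_ge v (2 * n) with hlt | hge
    · exact hbase v hv hlt
    · obtain ⟨k, rfl⟩ : ∃ k, v = k + n := ⟨v - n, by omega⟩
      rw [hrec k (by omega)]
      exact recurrence_step_mem_Icc hn ha hp fun m hm => ih (k + m) (by omega) (by omega)

end

theorem stmt_12_general (n : ℕ) (hn : 1 ≤ n) (a p : ℝ) (ha : 0 < a) (hp : 0 < p)
    (S : ℕ → ℝ)
    (h1 : ∀ v : ℕ, v ≤ 2 * n - 1 → v ≠ n - 1 → S v = a ^ v)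
    (h3 : ∀ v : ℕ, 2 * n - 1 ≤ v →
      S (v + 1) = (a ^ (2 * n - 1) / (n * a ^ (n - 1) + p)) *
        ∑ m ∈ Finset.range n, S (v + m + 1 - n) / a ^ m) :
    ∀ v : ℕ, 2 * n ≤ v → 0 ≤ S v ∧ S v ≤ a ^ v := by
  have hbase : ∀ v, n ≤ v → v < 2 * n → S v ∈ Set.Icc 0 (a ^ v) := fun v hnv hv => by
    rw [h1 v (by omega) (by omega)]
    exact ⟨by positivity, le_rfl⟩
  have hrec : ∀ k, n ≤ k → S (k + n) = a ^ (2 * n - 1) / (n * a ^ (n - 1) + p) *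
      ∑ m ∈ range n, S (k + m) / a ^ m := fun k hk => by
    have h := h3 (k + n - 1) (by omega)
    rw [show k + n - 1 + 1 = k + n by omega] at h
    rw [h]
    congr 1
    exact sum_congr rfl fun m _ => by rw [show k + n - 1 + m + 1 - n = k + m by omega]
  exact fun v hv => mem_Icc_of_recurrence hn ha hp.le hbase hrec v (by omega)

/-- The generalized power sums of the regularized extrapolation problem satisfy
`0 ≤ S_v ≤ a^v` for `v ≥ 2n`. -/
theorem stmt_12 (n : ℕ) (hn : 1 ≤ n) (a p : ℝ) (ha : 0 < a) (hp : 0 < p)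
    (S : ℕ → ℝ)
    (h1 : ∀ v : ℕ, v ≤ 2 * n - 1 → v ≠ n - 1 → S v = a ^ v)
    (h2 : S (n - 1) = a ^ (n - 1) + p)
    (h3 : ∀ v : ℕ, 2 * n - 1 ≤ v →
      S (v + 1) = (a ^ (2 * n - 1) / (n * a ^ (n - 1) + p)) *
        ∑ m ∈ Finset.range n, S (v + m + 1 - n) / a ^ m) :
    ∀ v : ℕ, 2 * n ≤ v → 0 ≤ S v ∧ S v ≤ a ^ v :=
  stmt_12_general n hn a p ha hp S h1 h3
end

section
/- Let p, q be nonzero complex numbers, 0 ≤ ν ≤ n - 1 an integer, λ_k = (q/p)^{1/n} exp(2πi(k-1)/n) for k = 1,...,n (any fixed n-th root), and μ_k = (-1)^{n-ν-1} λ_k σ_{n-ν-1}^{(k)} p^2 / (q n), where σ_m^{(k)} is the m-th elementary symmetric polynomial of λ_1, ..., λ_{k-1}, λ_{k+1}, ..., λ_n. Then Σ_{k=1}^n μ_k λ_k^m = p if m = ν, q if m = ν + n, and 0 for all other m with 0 ≤ m ≤ 2n + ν - 1. -/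
/-! The `λ_k` are exactly the roots of `X ^ n - q / p`, so the elementary symmetric functions of
all of them vanish in degrees `1, …, n - 1`; peeling off `λ_k` gives `σ_m^{(k)} = (-λ_k)^m` for
`m < n`, hence `μ_k = p² λ_k^{n-ν} / (q n)`. The moments thus reduce to power sums `Σ_k λ_k^r`,
which equal `n w^r` when `n ∣ r` and vanish otherwise, and for `m ≤ 2n + ν - 1` the exponent
`r = n - ν + m` is a multiple of `n` only at `m = ν` and `m = ν + n`. -/

open Finset Complex Polynomial

namespace Multiset

variable {R : Type*} [CommRing R]

theorem esymm_cons_succ (a : R) (s : Multiset R) (m : ℕ) :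
    (a ::ₘ s).esymm (m + 1) = s.esymm (m + 1) + a * s.esymm m := by
  rw [esymm, powersetCard_cons, map_add, sum_add, map_map]
  congr 1
  rw [esymm, ← sum_map_mul_left]
  congr 1
  exact map_congr rfl fun t _ => by simp [prod_cons]

theorem esymm_eq_neg_pow_of_esymm_cons_eq_zero {a : R} {s : Multiset R} {m : ℕ}
    (h : ∀ j, 0 < j → j ≤ m → (a ::ₘ s).esymm j = 0) : s.esymm m = (-a) ^ m := by
  induction m with
  | zero => simp [esymm, powersetCard_zero_left]
  | succ m ih =>
    have hm := h (m + 1) m.succ_pos le_rfl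
    rw [esymm_cons_succ, ih fun j hj0 hjm => h j hj0 (by omega)] at hm
    rw [eq_neg_of_add_eq_zero_left hm]
    ring

theorem esymm_eq_zero_of_prod_X_sub_C_eq [Nontrivial R] {s : Multiset R} {n j : ℕ} {c : R}
    (h : (s.map fun x => X - C x).prod = X ^ n - C c) (hj0 : 0 < j) (hjn : j < n) :
    s.esymm j = 0 := by
  have hcard : card s = n := by
    rw [← natDegree_multiset_prod_X_sub_C_eq_card, h, natDegree_X_pow_sub_C]
  have hcoeff := prod_X_sub_C_coeff s (k := n - j) (by omega)
  rw [h, hcard, Nat.sub_sub_self hjn.le, coeff_sub, coeff_X_pow, coeff_C,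
    if_neg (by omega), if_neg (by omega), sub_zero] at hcoeff
  exact ((isUnit_one.neg.pow j).mul_right_eq_zero).mp hcoeff.symm

end Multiset

theorem neg_one_pow_mul_esymm_erase_of_prod_X_sub_C_eq {R : Type*} [CommRing R] [Nontrivial R]
    {n : ℕ} {lam : Fin n → R} {c : R} (h : ∏ k, (X - C (lam k)) = X ^ n - C c)
    (k : Fin n) {m : ℕ} (hm : m < n) :
    (-1) ^ m * ((univ.erase k).val.map lam).esymm m = lam k ^ m := by
  have hcons : ∀ j, 0 < j → j ≤ m → (lam k ::ₘ (univ.erase k).val.map lam).esymm j = 0 := by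
    intro j hj0 hjm
    rw [← Multiset.map_cons, erase_val, Multiset.cons_erase (mem_univ k)]
    exact Multiset.esymm_eq_zero_of_prod_X_sub_C_eq (by rw [Multiset.map_map, ← h]; rfl) hj0
      (by omega)
  rw [Multiset.esymm_eq_neg_pow_of_esymm_cons_eq_zero hcons, ← mul_pow]
  simp

theorem IsPrimitiveRoot.sum_pow_mul_pow {R : Type*} [CommRing R] [IsDomain R] {ζ : R} {n : ℕ}
    (hζ : IsPrimitiveRoot ζ n) (w : R) (r : ℕ) :
    ∑ k : Fin n, (ζ ^ (k : ℕ) * w) ^ r = if n ∣ r then n * w ^ r else 0 := by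
  simp_rw [mul_pow, ← pow_mul, mul_comm _ r, pow_mul, ← sum_mul]
  rw [Fin.sum_univ_eq_sum_range (fun i => (ζ ^ r) ^ i)]
  split_ifs with hr
  · simp [(hζ.pow_eq_one_iff_dvd r).mpr hr]
  · have hζr : ζ ^ r - 1 ≠ 0 := sub_ne_zero.mpr fun h => hr ((hζ.pow_eq_one_iff_dvd r).mp h)
    have hgeom := geom_sum_mul (ζ ^ r) n
    rw [← pow_mul, mul_comm r n, pow_mul, hζ.pow_eq_one, one_pow, sub_self] at hgeom
    rw [(mul_eq_zero.mp hgeom).resolve_right hζr, zero_mul]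

theorem Nat.eq_or_eq_add_of_dvd_sub_add {n ν m : ℕ} (hν : ν < n) (hm : m < 2 * n + ν)
    (h : n ∣ n - ν + m) : m = ν ∨ m = ν + n := by
  obtain ⟨c, hc⟩ := h
  have hc3 : c < 3 := by
    by_contra! hc3
    have := Nat.mul_le_mul_left n hc3
    omega
  interval_cases c <;> omega

/-- The moment identities underlying the interpolation formula
`p f_ν z^ν + q f_{ν+n} z^{ν+n} = Σ_k μ_k f(λ_k z) + O(z^{2n+ν})`:
with `λ_k` the `n`-th roots of `q/p` and explicit `μ_k`, the generalized power
sums `Σ_k μ_k λ_k^m` equal `p` at `m = ν`, `q` at `m = ν + n`, and `0` for all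
other `m ≤ 2n + ν - 1`. -/
theorem stmt_15 (n ν : ℕ) (hn : 1 ≤ n) (hν : ν ≤ n - 1)
    (p q : ℂ) (hp : p ≠ 0) (hq : q ≠ 0)
    (w : ℂ) (hw : w ^ n = q / p)
    (lam : Fin n → ℂ)
    (hlam : ∀ k : Fin n,
      lam k = w * Complex.exp (2 * Real.pi * Complex.I * (k : ℕ) / n))
    (μ : Fin n → ℂ)
    (hμ : ∀ k : Fin n, μ k = (-1) ^ (n - ν - 1) * lam k *
      (((Finset.univ.erase k).val.map lam).esymm (n - ν - 1)) * p ^ 2 / (q * n)) :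
    (∑ k, μ k * lam k ^ ν = p) ∧ (∑ k, μ k * lam k ^ (ν + n) = q) ∧
      ∀ m : ℕ, m ≤ 2 * n + ν - 1 → m ≠ ν → m ≠ ν + n →
        ∑ k, μ k * lam k ^ m = 0 := by
  have hn0 : (n : ℂ) ≠ 0 := Nat.cast_ne_zero.mpr (by omega)
  set ζ := Complex.exp (2 * Real.pi * Complex.I / n)
  have hζ : IsPrimitiveRoot ζ n := Complex.isPrimitiveRoot_exp n (by omega)
  have hlam_pow : lam = fun k : Fin n => ζ ^ (k : ℕ) * w := by
    ext k
    rw [hlam k, mul_comm, ← Complex.exp_nat_mul]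
    ring_nf
  have hprod : ∏ k, (X - C (lam k)) = X ^ n - C (q / p) := by
    rw [X_pow_sub_C_eq_prod hζ (by omega) hw, ← Fin.prod_univ_eq_prod_range, hlam_pow]
  have hμ_pow : ∀ k, μ k = p ^ 2 / (q * n) * lam k ^ (n - ν) := by
    intro k
    set j := n - ν - 1
    rw [hμ k, show n - ν = j + 1 by omega]
    linear_combination (lam k * p ^ 2 / (q * n)) *
      neg_one_pow_mul_esymm_erase_of_prod_X_sub_C_eq hprod k (show j < n by omega)
  have hmoment : ∀ m, ∑ k, μ k * lam k ^ m =
      p ^ 2 / (q * n) * if n ∣ n - ν + m then n * w ^ (n - ν + m) else 0 := by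
    intro m
    simp_rw [hμ_pow, mul_assoc, ← pow_add, ← mul_sum, hlam_pow, hζ.sum_pow_mul_pow]
  refine ⟨?_, ?_, fun m hm hmν hmνn => ?_⟩
  · rw [hmoment, show n - ν + ν = n by omega, if_pos dvd_rfl, hw]
    field_simp
  · rw [hmoment, show n - ν + (ν + n) = n * 2 by omega, if_pos (dvd_mul_right n 2), pow_mul, hw]
    field_simp
  · rw [hmoment, if_neg, mul_zero]
    intro hdvd
    rcases Nat.eq_or_eq_add_of_dvd_sub_add (by omega) (by omega) hdvd with rfl | rfl <;>
      contradiction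
end

section
/- Let n ≥ 3 and let Ĝ_n = ĝ_n(λ^n - (6/((n-1)(n-2))) Σ_{m=1}^{n-1}(n-1-m)λ^m + 2 + 6p/((n-1)(n-2))) be the generating polynomial of the regularized differentiation problem with coefficients ĝ_m as in Lemma (factorization), and moments s_m = m (m ≠ n-1, 2n-1), s_{n-1} = n-1+p, s_{2n-1} = 2n-1+q with q = -2p(3p+n^2-1)/((n-1)(n-2)). Then the 2n-th moment determined by the Newton recurrence S_{2n} = -(1/ĝ_n) Σ_{m=0}^{n-1} s_{n+m} ĝ_m equals 2n - 6np/((n-1)(n-2)). -/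
/-!
Apart from the bump at `m = 0`, the coefficients `ĝ_m` follow the linear profile
`c (n - 1 - m)` with `c = -6 ĝ_n / ((n-1)(n-2))`, and `s_{n+m} = n + m` wherever `ĝ_m ≠ 0`.
The sum is therefore `n (ĝ_0 - c (n-1)) + c ∑_{m<n} (n+m)(n-1-m)`, and the last sum is
`n(n-1)(2n-1)/3`.
-/

open Finset

theorem Finset.sum_range_add_mul_sub {K : Type*} [Field K] [CharZero K] (a b : K) (N : ℕ) :
    ∑ m ∈ range N, (a + m) * (b - m)
      = N * a * b + N * (N - 1) / 2 * (b - a) - N * (N - 1) * (2 * N - 1) / 6 := by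
  induction N with
  | zero => simp
  | succ N ih => rw [sum_range_succ, ih]; push_cast; ring

theorem Finset.sum_range_natCast_add_mul_sub {K : Type*} [Field K] [CharZero K] (N : ℕ) :
    ∑ m ∈ range N, ((N : K) + m) * (N - 1 - m) = N * (N - 1) * (2 * N - 1) / 3 := by
  rw [sum_range_add_mul_sub]; ring

theorem stmt_19_general (n : ℕ) (hn : 3 ≤ n) (p : ℂ)
    (q : ℂ)
    (s : ℕ → ℂ)
    (hs : ∀ m : ℕ, s m =
      if m = n - 1 then (n : ℂ) - 1 + p
      else if m = 2 * n - 1 then 2 * (n : ℂ) - 1 + q else (m : ℂ))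
    (gn : ℂ) (hgn : gn ≠ 0)
    (g : ℕ → ℂ)
    (hg0 : g 0 = gn * (2 + 6 * p / (((n : ℂ) - 1) * ((n : ℂ) - 2))))
    (hgm : ∀ m : ℕ, 1 ≤ m → m ≤ n - 1 →
      g m = -6 * gn * ((n : ℂ) - 1 - m) / (((n : ℂ) - 1) * ((n : ℂ) - 2))) :
    -(1 / gn) * ∑ m ∈ Finset.range n, s (n + m) * g m
      = 2 * n - 6 * n * p / (((n : ℂ) - 1) * ((n : ℂ) - 2)) := by
  set c := -6 * gn / (((n : ℂ) - 1) * ((n : ℂ) - 2)) with hc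
  have h₁ : (n : ℂ) - 1 ≠ 0 := sub_ne_zero.mpr (by norm_cast; omega)
  have h₂ : (n : ℂ) - 2 ≠ 0 := sub_ne_zero.mpr (by norm_cast; omega)
  have hg : ∀ m, 1 ≤ m → m ≤ n - 1 → g m = c * ((n : ℂ) - 1 - m) := fun m hm₁ hm₂ => by
    rw [hgm m hm₁ hm₂]; ring
  -- The perturbed moment `s (2n-1)` only meets `g (n-1)`, which vanishes.
  have hsg : ∀ m ∈ range n, s (n + m) * g m = ((n : ℂ) + m) * g m := by
    intro m hm
    rw [mem_range] at hm
    by_cases hlast : m = n - 1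
    · have : g m = 0 := by
        rw [hg m (by omega) hlast.le, hlast, Nat.cast_sub (by omega)]; ring
      simp [this]
    · rw [hs, if_neg (by omega), if_neg (by omega)]; push_cast; rfl
  have hbump : ∑ m ∈ range n, ((n : ℂ) + m) * g m
      = ∑ m ∈ range n, ((n : ℂ) + m) * (c * ((n : ℂ) - 1 - m)) + n * (g 0 - c * (n - 1)) := by
    rw [← sub_eq_iff_eq_add', ← sum_sub_distrib, sum_eq_single 0]
    · simp only [Nat.cast_zero]; ring
    · intro m hm hm0
      rw [mem_range] at hm
      rw [hg m (by omega) (by omega), sub_self]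
    · simp; omega
  have hprofile : ∑ m ∈ range n, ((n : ℂ) + m) * (c * ((n : ℂ) - 1 - m))
      = c * (n * (n - 1) * (2 * n - 1) / 3) := by
    rw [← sum_range_natCast_add_mul_sub, mul_sum]
    exact sum_congr rfl fun m _ => by ring
  rw [sum_congr rfl hsg, hbump, hprofile, hg0, hc]
  field_simp
  ring

/-- The `2n`-th moment of the regularized differentiation problem, computed via
the Newton recurrence, equals `2n - 6np/((n-1)(n-2))`. -/
theorem stmt_19 (n : ℕ) (hn : 3 ≤ n) (p : ℂ) (hp : p ≠ 0)
    (q : ℂ) (hq : q = -2 * p * (3 * p + n ^ 2 - 1) / ((n - 1) * (n - 2)))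
    (s : ℕ → ℂ)
    (hs : ∀ m : ℕ, s m =
      if m = n - 1 then (n : ℂ) - 1 + p
      else if m = 2 * n - 1 then 2 * (n : ℂ) - 1 + q else (m : ℂ))
    (gn : ℂ) (hgn : gn ≠ 0)
    (g : ℕ → ℂ)
    (hg0 : g 0 = gn * (2 + 6 * p / (((n : ℂ) - 1) * ((n : ℂ) - 2))))
    (hgm : ∀ m : ℕ, 1 ≤ m → m ≤ n - 1 →
      g m = -6 * gn * ((n : ℂ) - 1 - m) / (((n : ℂ) - 1) * ((n : ℂ) - 2))) :
    -(1 / gn) * ∑ m ∈ Finset.range n, s (n + m) * g m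
      = 2 * n - 6 * n * p / (((n : ℂ) - 1) * ((n : ℂ) - 2)) :=
  stmt_19_general n hn p q s hs gn hgn g hg0 hgm
end
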